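/- Let T be a shape-regular element with diameter h_T. There exist constants C_1, C_2 > 0 independent of h_T such that for every weak function v = {v_0, v_b} in the local WG space (v_0 ∈ P_k(T), v_b ∈ P_{k-1}(e) on each face e): C_1 (‖∇v_0‖_T^2 + h_T^{-1}‖Q_b v_0 - v_b‖_{∂T}^2) ≤ ‖∇_w v‖_T^2 + h_T^{-1}‖Q_b v_0 - v_b‖_{∂T}^2 ≤ C_2 (‖∇v_0‖_T^2 + h_T^{-1}‖Q_b v_0 - v_b‖_{∂T}^2). -/

import Mathlib

/-!
Test the defining identity of the weak gradient once with `q = ∇_w v` and once with `q = ∇v₀`.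
Both times it reads `‖u‖²_T = (w, u)_T + ⟨e, u·n⟩_{∂T}` with `{u, w} = {∇_w v, ∇v₀}` and
`e = ±(Q_b v₀ - v_b)`. Young's inequality on the two pairings, with the trace–inverse inequality
`‖u‖²_{∂T} ≤ C_t h⁻¹ ‖u‖²_T` to absorb the boundary remainder, gives
`‖u‖²_T ≤ 2‖w‖²_T + 2 C_t h⁻¹ ‖e‖²_{∂T}`. These two bounds yield the equivalence with
`C₂ = 2 C_t + 2` and `C₁ = C₂⁻¹`.
-/

open MeasureTheory
open scoped RealInnerProductSpace

abbrev Euc (d : ℕ) := EuclideanSpace ℝ (Fin d)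

def PolyScal (d r : ℕ) : Set (Euc d → ℝ) :=
  {f | ∃ p : MvPolynomial (Fin d) ℝ, p.totalDegree ≤ r ∧
    ∀ x, f x = MvPolynomial.eval (fun i => x i) p}

def PolyVec (d r : ℕ) : Set (Euc d → Euc d) :=
  {q | ∀ i, (fun x => q x i) ∈ PolyScal d r}

theorem continuous_of_mem_polyScal {d r : ℕ} {f : Euc d → ℝ} (hf : f ∈ PolyScal d r) :
    Continuous f := by
  obtain ⟨p, -, hp⟩ := hf
  rw [show f = _ from funext hp]
  exact p.continuous_eval.comp
    (continuous_pi fun i => (continuous_apply i).comp (PiLp.continuous_ofLp 2 _))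

theorem continuous_of_mem_polyVec {d r : ℕ} {q : Euc d → Euc d} (hq : q ∈ PolyVec d r) :
    Continuous q :=
  (PiLp.continuous_toLp 2 _).comp (continuous_pi fun i => continuous_of_mem_polyScal (hq i))

theorem Continuous.integrableOn_of_isBounded {E : Type*} [MetricSpace E] [ProperSpace E]
    [MeasurableSpace E] [OpensMeasurableSpace E] {μ : Measure E} [IsLocallyFiniteMeasure μ]
    {f : E → ℝ} {s : Set E} (hf : Continuous f) (hs : Bornology.IsBounded s) :
    IntegrableOn f s μ :=
  (hf.continuousOn.integrableOn_compact hs.isCompact_closure).mono_set subset_closure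

theorem two_mul_integral_le_of_le_abs_mul_abs {α : Type*} [MeasurableSpace α] {μ : Measure α}
    {f a b : α → ℝ} {ε : ℝ} (hε : 0 < ε) (hf : Integrable f μ)
    (ha : Integrable (fun x => a x ^ 2) μ) (hb : Integrable (fun x => b x ^ 2) μ)
    (hfab : ∀ x, f x ≤ |a x| * |b x|) :
    2 * ∫ x, f x ∂μ ≤ ε * ∫ x, a x ^ 2 ∂μ + ε⁻¹ * ∫ x, b x ^ 2 ∂μ := by
  rw [← integral_const_mul, ← integral_const_mul, ← integral_const_mul,
    ← integral_add (ha.const_mul ε) (hb.const_mul ε⁻¹)]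
  refine integral_mono (hf.const_mul 2) ((ha.const_mul ε).add (hb.const_mul ε⁻¹)) fun x => ?_
  calc 2 * f x ≤ 2 * |a x| * |b x| := by
        rw [mul_assoc]; exact mul_le_mul_of_nonneg_left (hfab x) zero_le_two
    _ ≤ ε * |a x| ^ 2 + ε⁻¹ * |b x| ^ 2 := two_mul_le_add_mul_sq hε
    _ = ε * a x ^ 2 + ε⁻¹ * b x ^ 2 := by rw [sq_abs, sq_abs]

theorem integral_norm_sq_le_of_pairing {α E : Type*} [MeasurableSpace α] [NormedAddCommGroup E]
    [InnerProductSpace ℝ E] {μ ν : Measure α} {u w n : α → E} {e : α → ℝ} {c : ℝ} (hc : 0 < c)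
    (hn : ∀ x, ‖n x‖ ≤ 1) (hu : Integrable (fun x => ‖u x‖ ^ 2) μ)
    (hw : Integrable (fun x => ‖w x‖ ^ 2) μ) (hwu : Integrable (fun x => ⟪w x, u x⟫) μ)
    (huν : Integrable (fun x => ‖u x‖ ^ 2) ν) (he : Integrable (fun x => e x ^ 2) ν)
    (hen : Integrable (fun x => e x * ⟪u x, n x⟫) ν)
    (htrace : ∫ x, ‖u x‖ ^ 2 ∂ν ≤ c * ∫ x, ‖u x‖ ^ 2 ∂μ)
    (hpair : ∫ x, ⟪u x, u x⟫ ∂μ = ∫ x, ⟪w x, u x⟫ ∂μ + ∫ x, e x * ⟪u x, n x⟫ ∂ν) :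
    ∫ x, ‖u x‖ ^ 2 ∂μ ≤ 2 * ∫ x, ‖w x‖ ^ 2 ∂μ + 2 * c * ∫ x, e x ^ 2 ∂ν := by
  simp only [real_inner_self_eq_norm_sq] at hpair
  have hvol : 2 * ∫ x, ⟪w x, u x⟫ ∂μ ≤ 2 * ∫ x, ‖w x‖ ^ 2 ∂μ + 2⁻¹ * ∫ x, ‖u x‖ ^ 2 ∂μ :=
    two_mul_integral_le_of_le_abs_mul_abs two_pos hwu hw hu fun x => by
      simpa only [abs_norm] using real_inner_le_norm (w x) (u x)
  have hbdry : 2 * ∫ x, e x * ⟪u x, n x⟫ ∂ν ≤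
      2 * c * ∫ x, e x ^ 2 ∂ν + (2 * c)⁻¹ * ∫ x, ‖u x‖ ^ 2 ∂ν := by
    refine two_mul_integral_le_of_le_abs_mul_abs (by positivity) hen he huν fun x => ?_
    calc e x * ⟪u x, n x⟫ ≤ |e x| * |⟪u x, n x⟫| := (le_abs_self _).trans (abs_mul _ _).le
      _ ≤ |e x| * |‖u x‖| := by
        rw [abs_norm]
        gcongr
        calc |⟪u x, n x⟫| ≤ ‖u x‖ * ‖n x‖ := abs_real_inner_le_norm _ _
          _ ≤ ‖u x‖ := mul_le_of_le_one_right (norm_nonneg _) (hn x)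
  have htrace' : (2 * c)⁻¹ * ∫ x, ‖u x‖ ^ 2 ∂ν ≤ 2⁻¹ * ∫ x, ‖u x‖ ^ 2 ∂μ := by
    calc (2 * c)⁻¹ * ∫ x, ‖u x‖ ^ 2 ∂ν ≤ (2 * c)⁻¹ * (c * ∫ x, ‖u x‖ ^ 2 ∂μ) := by gcongr
      _ = 2⁻¹ * ∫ x, ‖u x‖ ^ 2 ∂μ := by field_simp
  linarith

theorem integral_norm_sq_le_of_pairing_on_isBounded {X E : Type*} [MetricSpace X] [ProperSpace X]
    [MeasurableSpace X] [OpensMeasurableSpace X] [NormedAddCommGroup E] [InnerProductSpace ℝ E]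
    {μ σ : Measure X} [IsLocallyFiniteMeasure μ] [IsLocallyFiniteMeasure σ] {T : Set X}
    (hT : Bornology.IsBounded T) {u w n : X → E} {e : X → ℝ} {c : ℝ} (hc : 0 < c)
    (hn : ∀ x, ‖n x‖ ≤ 1) (hu : Continuous u) (hw : Continuous w)
    (he : Integrable (fun x => e x ^ 2) (σ.restrict (frontier T)))
    (hen : Integrable (fun x => e x * ⟪u x, n x⟫) (σ.restrict (frontier T)))
    (htrace : ∫ x in frontier T, ‖u x‖ ^ 2 ∂σ ≤ c * ∫ x in T, ‖u x‖ ^ 2 ∂μ)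
    (hpair : ∫ x in T, ⟪u x, u x⟫ ∂μ =
      ∫ x in T, ⟪w x, u x⟫ ∂μ + ∫ x in frontier T, e x * ⟪u x, n x⟫ ∂σ) :
    ∫ x in T, ‖u x‖ ^ 2 ∂μ ≤
      2 * ∫ x in T, ‖w x‖ ^ 2 ∂μ + 2 * c * ∫ x in frontier T, e x ^ 2 ∂σ :=
  have hbdry : Bornology.IsBounded (frontier T) := hT.closure.subset frontier_subset_closure
  integral_norm_sq_le_of_pairing hc hn ((hu.norm.pow 2).integrableOn_of_isBounded hT)
    ((hw.norm.pow 2).integrableOn_of_isBounded hT) ((hw.inner hu).integrableOn_of_isBounded hT)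
    ((hu.norm.pow 2).integrableOn_of_isBounded hbdry) he hen htrace hpair

theorem add_le_mul_add_of_le_two_mul_add {Ct h A W B : ℝ} (hCt : 0 ≤ Ct) (hh : 0 ≤ h)
    (hB : 0 ≤ B) (hA : 0 ≤ A) (hW : W ≤ 2 * A + 2 * (Ct * h) * B) :
    W + h * B ≤ (2 * Ct + 2) * (A + h * B) := by
  nlinarith [mul_nonneg hCt hA, mul_nonneg hh hB]

theorem wg_norm_equivalence_general (d k : ℕ) (Ct : ℝ) (hCt : 0 < Ct) :
    ∃ C1 > (0:ℝ), ∃ C2 > (0:ℝ),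
      ∀ (T : Set (Euc d)), IsOpen T → T.Nonempty → Bornology.IsBounded T →
      ∀ (hT : ℝ), 0 < hT →
      ∀ (σ : Measure (Euc d)), IsFiniteMeasure σ →
      ∀ (n : Euc d → Euc d), (∀ x, ‖n x‖ ≤ 1) →
      -- trace–inverse inequality for polynomials on the shape-regular element T
      (∀ q ∈ PolyVec d (k-1),
        (∫ x in frontier T, ‖q x‖ ^ 2 ∂σ) ≤ Ct * hT⁻¹ * ∫ x in T, ‖q x‖ ^ 2) →
      ∀ (v0 : Euc d → ℝ) (g : Euc d → Euc d),
        -- g = ∇v₀ ∈ [P_{k-1}(T)]^d with v₀ ∈ P_k(T)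
        v0 ∈ PolyScal d k → g ∈ PolyVec d (k-1) →
        (∀ x, fderiv ℝ v0 x = (innerSL ℝ) (g x)) →
      ∀ (vb Qbv0 : Euc d → ℝ),
        Integrable (fun x => (Qbv0 x - vb x) ^ 2) (σ.restrict (frontier T)) →
        (∀ q ∈ PolyVec d (k-1),
          Integrable (fun x => (Qbv0 x - vb x) * ⟪q x, n x⟫) (σ.restrict (frontier T))) →
      ∀ (wg : Euc d → Euc d), wg ∈ PolyVec d (k-1) →
        -- ∇_w v: (∇_w v, q)_T = (∇v₀, q)_T + ⟨v_b - Q_b v₀, q·n⟩_{∂T}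
        (∀ q ∈ PolyVec d (k-1),
          ∫ x in T, ⟪wg x, q x⟫ =
            (∫ x in T, ⟪g x, q x⟫) +
              ∫ x in frontier T, (vb x - Qbv0 x) * ⟪q x, n x⟫ ∂σ) →
        C1 * ((∫ x in T, ‖g x‖ ^ 2) +
              hT⁻¹ * ∫ x in frontier T, (Qbv0 x - vb x) ^ 2 ∂σ) ≤
          (∫ x in T, ‖wg x‖ ^ 2) +
              hT⁻¹ * ∫ x in frontier T, (Qbv0 x - vb x) ^ 2 ∂σ ∧
        (∫ x in T, ‖wg x‖ ^ 2) +
              hT⁻¹ * ∫ x in frontier T, (Qbv0 x - vb x) ^ 2 ∂σ ≤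
          C2 * ((∫ x in T, ‖g x‖ ^ 2) +
              hT⁻¹ * ∫ x in frontier T, (Qbv0 x - vb x) ^ 2 ∂σ) := by
  have hC : (0 : ℝ) < 2 * Ct + 2 := by positivity
  refine ⟨(2 * Ct + 2)⁻¹, inv_pos.2 hC, 2 * Ct + 2, hC, ?_⟩
  intro T _ _ hTb hT hhT σ _ n hn htrace _ g _ hg _ vb Qbv0 hsq hib wg hwg hident
  have hc : 0 < Ct * hT⁻¹ := by positivity
  have hup := integral_norm_sq_le_of_pairing_on_isBounded hTb hc hn (continuous_of_mem_polyVec hwg)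
    (continuous_of_mem_polyVec hg) (by simpa only [sub_sq_comm] using hsq)
    (by simpa only [← neg_mul, neg_sub] using (hib wg hwg).fun_neg) (htrace wg hwg) (hident wg hwg)
  have hflip : ∫ x in frontier T, (Qbv0 x - vb x) * ⟪g x, n x⟫ ∂σ =
      -∫ x in frontier T, (vb x - Qbv0 x) * ⟪g x, n x⟫ ∂σ := by
    simp only [← integral_neg, ← neg_mul, neg_sub]
  have hlo := integral_norm_sq_le_of_pairing_on_isBounded hTb hc hn (continuous_of_mem_polyVec hg)
    (continuous_of_mem_polyVec hwg) hsq (hib g hg) (htrace g hg)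
    (by rw [hflip]; linarith [hident g hg])
  simp only [sub_sq_comm (vb _)] at hup
  have hB : 0 ≤ ∫ x in frontier T, (Qbv0 x - vb x) ^ 2 ∂σ := integral_nonneg fun _ => sq_nonneg _
  exact ⟨(inv_mul_le_iff₀ hC).2 (add_le_mul_add_of_le_two_mul_add hCt.le (by positivity) hB
      (integral_nonneg fun _ => sq_nonneg _) hlo),
    add_le_mul_add_of_le_two_mul_add hCt.le (by positivity) hB
      (integral_nonneg fun _ => sq_nonneg _) hup⟩

/-- equivalence of the discrete `H¹` norm and the triple-bar (energy) norm,
elementwise. There are constants `C₁, C₂ > 0` independent of `h_T` such that for every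
shape-regular element (encoded by the polynomial trace–inverse inequality with constant
`Ct`) and every local WG function `v = {v₀, v_b}`,
`C₁(‖∇v₀‖²_T + h_T⁻¹‖Q_b v₀ - v_b‖²_{∂T}) ≤ ‖∇_w v‖²_T + h_T⁻¹‖Q_b v₀ - v_b‖²_{∂T}
 ≤ C₂(‖∇v₀‖²_T + h_T⁻¹‖Q_b v₀ - v_b‖²_{∂T})`. -/
theorem wg_norm_equivalence (d k : ℕ) (hk : 1 ≤ k) (Ct : ℝ) (hCt : 0 < Ct) :
    ∃ C1 > (0:ℝ), ∃ C2 > (0:ℝ),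
      ∀ (T : Set (Euc d)), IsOpen T → T.Nonempty → Bornology.IsBounded T →
      ∀ (hT : ℝ), 0 < hT →
      ∀ (σ : Measure (Euc d)), IsFiniteMeasure σ →
      ∀ (n : Euc d → Euc d), (∀ x, ‖n x‖ ≤ 1) →
      -- trace–inverse inequality for polynomials on the shape-regular element T
      (∀ q ∈ PolyVec d (k-1),
        (∫ x in frontier T, ‖q x‖ ^ 2 ∂σ) ≤ Ct * hT⁻¹ * ∫ x in T, ‖q x‖ ^ 2) →
      ∀ (v0 : Euc d → ℝ) (g : Euc d → Euc d),
        -- g = ∇v₀ ∈ [P_{k-1}(T)]^d with v₀ ∈ P_k(T)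
        v0 ∈ PolyScal d k → g ∈ PolyVec d (k-1) →
        (∀ x, fderiv ℝ v0 x = (innerSL ℝ) (g x)) →
      ∀ (vb Qbv0 : Euc d → ℝ),
        Integrable (fun x => (Qbv0 x - vb x) ^ 2) (σ.restrict (frontier T)) →
        (∀ q ∈ PolyVec d (k-1),
          Integrable (fun x => (Qbv0 x - vb x) * ⟪q x, n x⟫) (σ.restrict (frontier T))) →
      ∀ (wg : Euc d → Euc d), wg ∈ PolyVec d (k-1) →
        -- ∇_w v: (∇_w v, q)_T = (∇v₀, q)_T + ⟨v_b - Q_b v₀, q·n⟩_{∂T}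
        (∀ q ∈ PolyVec d (k-1),
          ∫ x in T, ⟪wg x, q x⟫ =
            (∫ x in T, ⟪g x, q x⟫) +
              ∫ x in frontier T, (vb x - Qbv0 x) * ⟪q x, n x⟫ ∂σ) →
        C1 * ((∫ x in T, ‖g x‖ ^ 2) +
              hT⁻¹ * ∫ x in frontier T, (Qbv0 x - vb x) ^ 2 ∂σ) ≤
          (∫ x in T, ‖wg x‖ ^ 2) +
              hT⁻¹ * ∫ x in frontier T, (Qbv0 x - vb x) ^ 2 ∂σ ∧
        (∫ x in T, ‖wg x‖ ^ 2) +
              hT⁻¹ * ∫ x in frontier T, (Qbv0 x - vb x) ^ 2 ∂σ ≤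
          C2 * ((∫ x in T, ‖g x‖ ^ 2) +
              hT⁻¹ * ∫ x in frontier T, (Qbv0 x - vb x) ^ 2 ∂σ) :=
  wg_norm_equivalence_general d k Ct hCt
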